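/- arXiv:1807.07812 — 2 statements merged into one kernel-verified Lean document; each statement's English description precedes it below -/
import Mathlib

section
/- Let I_n = P_n(h)/h₁(μ_n) − h₂(μ_n), I = E[h(X)]/h₁(μ) − h₂(μ), B_h = E[h(X)], K_φ = τ'(B_h/h₁(μ) − h₂(μ)), and F_φ(x) = K_φ ( h(x)/h₁(μ) − (B_h h₁'(μ)/h₁(μ)² + h₂'(μ)) x ). Assume h₁ is nonzero in a neighborhood of μ with h₁(μ) ≠ 0; E[h(X)²] < ∞, E[X h(X)] < ∞, E[X²] < ∞; h₁, h₂ are continuously differentiable at μ with finite values; τ is continuously differentiable with τ' ≠ 0; and K_φ is finite. Then √n (τ(I_n) − τ(I)) = G_n(F_φ) + R_n, where the remainder R_n converges to 0 in probability as n → ∞. -/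
open MeasureTheory ProbabilityTheory Filter Real
open scoped NNReal ENNReal Topology



lemma tendsto_slopePatch {f : ℝ → ℝ} {x d : ℝ} (hf : HasDerivAt f d x) :
    Tendsto (fun y => if y = x then d else (f y - f x) / (y - x)) (𝓝 x) (𝓝 d) := by
  have hs : Tendsto (slope f x) (𝓝[≠] x) (𝓝 d) := hasDerivAt_iff_tendsto_slope.mp hf
  rw [← nhdsNE_sup_pure x, Filter.tendsto_sup]
  constructor
  · refine hs.congr' ?_
    filter_upwards [self_mem_nhdsWithin] with y hy
    simp only [Set.mem_compl_iff, Set.mem_singleton_iff] at hy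
    rw [if_neg hy, slope_def_field]
  · have hv : (fun y => if y = x then d else (f y - f x) / (y - x)) x = d := by simp
    refine (tendsto_pure_pure _ x).mono_right ?_
    simp only [if_pos rfl]
    exact pure_le_nhds d

lemma tendstoInMeasure_zero_add' {Ω : Type*} [MeasurableSpace Ω] {P : Measure Ω}
    {f g : ℕ → Ω → ℝ}
    (hf : TendstoInMeasure P f atTop (fun _ => (0:ℝ)))
    (hg : TendstoInMeasure P g atTop (fun _ => (0:ℝ))) :
    TendstoInMeasure P (fun n ω => f n ω + g n ω) atTop (fun _ => (0:ℝ)) := by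
  rw [tendstoInMeasure_iff_dist] at hf hg ⊢
  intro ε hε
  rw [ENNReal.tendsto_nhds_zero]
  intro δ hδ
  have h2 : (0:ℝ) < ε / 2 := by linarith
  have hf' := ENNReal.tendsto_nhds_zero.mp (hf (ε/2) h2) (δ/2) (ENNReal.half_pos hδ.ne')
  have hg' := ENNReal.tendsto_nhds_zero.mp (hg (ε/2) h2) (δ/2) (ENNReal.half_pos hδ.ne')
  filter_upwards [hf', hg'] with n hfn hgn
  have hsub : {ω | ε ≤ dist (f n ω + g n ω) 0} ⊆
      {ω | ε/2 ≤ dist (f n ω) 0} ∪ {ω | ε/2 ≤ dist (g n ω) 0} := by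
    intro ω hω
    by_contra hc
    simp only [Set.mem_union, Set.mem_setOf_eq, not_or, not_le] at hc
    simp only [Set.mem_setOf_eq, Real.dist_eq, sub_zero] at hω hc
    have := abs_add_le (f n ω) (g n ω)
    linarith
  calc P {ω | ε ≤ dist (f n ω + g n ω) 0}
      ≤ P ({ω | ε/2 ≤ dist (f n ω) 0} ∪ {ω | ε/2 ≤ dist (g n ω) 0}) := measure_mono hsub
    _ ≤ P {ω | ε/2 ≤ dist (f n ω) 0} + P {ω | ε/2 ≤ dist (g n ω) 0} := measure_union_le _ _
    _ ≤ δ/2 + δ/2 := add_le_add hfn hgn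
    _ = δ := ENNReal.add_halves δ

/-- product of a uniformly tight sequence and a sequence tending to 0 in measure
tends to 0 in measure. -/
lemma tendstoInMeasure_zero_mul' {Ω : Type*} [MeasurableSpace Ω] {P : Measure Ω}
    {T E : ℕ → Ω → ℝ}
    (hT : ∀ δ : ℝ≥0∞, 0 < δ → ∃ M : ℝ, 0 < M ∧ ∀ n, P {ω | M ≤ |T n ω|} ≤ δ)
    (hE : TendstoInMeasure P E atTop (fun _ => (0:ℝ))) :
    TendstoInMeasure P (fun n ω => T n ω * E n ω) atTop (fun _ => (0:ℝ)) := by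
  rw [tendstoInMeasure_iff_dist] at hE ⊢
  intro ε hε
  rw [ENNReal.tendsto_nhds_zero]
  intro δ hδ
  obtain ⟨M, hM, hMn⟩ := hT (δ/2) (ENNReal.half_pos hδ.ne')
  have hE' := ENNReal.tendsto_nhds_zero.mp (hE (ε/M) (by positivity)) (δ/2)
    (ENNReal.half_pos hδ.ne')
  filter_upwards [hE'] with n hEn
  have hsub : {ω | ε ≤ dist (T n ω * E n ω) 0} ⊆
      {ω | M ≤ |T n ω|} ∪ {ω | ε/M ≤ dist (E n ω) 0} := by
    intro ω hω
    by_contra hc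
    simp only [Set.mem_union, Set.mem_setOf_eq, not_or, not_le] at hc
    simp only [Set.mem_setOf_eq, Real.dist_eq, sub_zero] at hω hc
    rw [abs_mul] at hω
    have h1 : |T n ω| * |E n ω| < M * (ε/M) := by
      apply mul_lt_mul'' hc.1 hc.2 (abs_nonneg _) (abs_nonneg _)
    rw [mul_div_cancel₀ _ hM.ne'] at h1
    linarith
  calc P {ω | ε ≤ dist (T n ω * E n ω) 0}
      ≤ P ({ω | M ≤ |T n ω|} ∪ {ω | ε/M ≤ dist (E n ω) 0}) := measure_mono hsub
    _ ≤ P {ω | M ≤ |T n ω|} + P {ω | ε/M ≤ dist (E n ω) 0} := measure_union_le _ _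
    _ ≤ δ/2 + δ/2 := add_le_add (hMn n) hEn
    _ = δ := ENNReal.add_halves δ

lemma tight_of_iid {Ω : Type*} [MeasurableSpace Ω] (P : Measure Ω) [IsProbabilityMeasure P]
    (Y : ℕ → Ω → ℝ) (hmeas : ∀ i, Measurable (Y i))
    (hindep : Pairwise (Function.onFun (IndepFun · · P) Y))
    (hident : ∀ i, IdentDistrib (Y i) (Y 0) P P)
    (hY2 : MemLp (Y 0) 2 P) (m : ℝ) (hm : m = ∫ ω, Y 0 ω ∂P) :
    ∀ δ : ℝ≥0∞, 0 < δ → ∃ M : ℝ, 0 < M ∧ ∀ n : ℕ,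
      P {ω | M ≤ |Real.sqrt n * ((n:ℝ)⁻¹ * ∑ j ∈ Finset.range n, Y j ω - m)|} ≤ δ := by
  set v : ℝ := variance (Y 0) P with hv
  have hvnn : 0 ≤ v := variance_nonneg _ _
  have cheb : ∀ M : ℝ, 0 < M → ∀ n : ℕ,
      P {ω | M ≤ |Real.sqrt n * ((n:ℝ)⁻¹ * ∑ j ∈ Finset.range n, Y j ω - m)|}
        ≤ ENNReal.ofReal (v / M ^ 2) := by
    intro M hM n
    rcases Nat.eq_zero_or_pos n with hn | hn
    · subst hn
      have : {ω | M ≤ |Real.sqrt 0 * ((0:ℝ)⁻¹ * ∑ j ∈ Finset.range 0, Y j ω - m)|} = ∅ := by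
        ext ω; simp [Real.sqrt_zero, not_le, hM]
      simp only [Nat.cast_zero, this, measure_empty]
      positivity
    · have hn' : (0:ℝ) < n := by exact_mod_cast hn
      set t : ℝ := Real.sqrt n with ht
      have htpos : 0 < t := Real.sqrt_pos.mpr hn'
      have ht2 : t ^ 2 = n := Real.sq_sqrt hn'.le
      have hmem : ∀ i ∈ Finset.range n, MemLp (Y i) 2 P :=
        fun i _ => (hident i).symm.memLp_snd hY2
      have hint : ∀ i, Integrable (Y i) P :=
        fun i => ((hident i).symm.memLp_snd hY2).integrable one_le_two
      have hES : ∫ ω, (∑ j ∈ Finset.range n, Y j) ω ∂P = n * m := by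
        simp only [Finset.sum_apply]
        rw [integral_finset_sum _ (fun i _ => hint i)]
        have : ∀ i ∈ Finset.range n, ∫ ω, Y i ω ∂P = m := by
          intro i _
          rw [hm]; exact (hident i).integral_eq
        rw [Finset.sum_congr rfl this, Finset.sum_const, Finset.card_range, nsmul_eq_mul]
      have hSmem : MemLp (∑ j ∈ Finset.range n, Y j) 2 P := memLp_finset_sum' _ hmem
      have hvarS : variance (∑ j ∈ Finset.range n, Y j) P = n * v := by
        rw [IndepFun.variance_sum hmem
          (fun i _ j _ hij => hindep hij)]
        have : ∀ i ∈ Finset.range n, variance (Y i) P = v :=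
          fun i _ => (hident i).variance_eq
        rw [Finset.sum_congr rfl this, Finset.sum_const, Finset.card_range, nsmul_eq_mul]
      have hcheb := meas_ge_le_variance_div_sq (μ := P) hSmem (c := M * t)
        (by positivity)
      have hsetEq : {ω | M ≤ |Real.sqrt n * ((n:ℝ)⁻¹ * ∑ j ∈ Finset.range n, Y j ω - m)|}
          = {ω | M * t ≤ |(∑ j ∈ Finset.range n, Y j) ω - P[∑ j ∈ Finset.range n, Y j]|} := by
        ext ω
        simp only [Set.mem_setOf_eq, Finset.sum_apply]
        have hES' : ∫ x, ∑ c ∈ Finset.range n, Y c x ∂P = n * m := by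
          simpa [Finset.sum_apply] using hES
        rw [hES']
        have heq : Real.sqrt n * ((n:ℝ)⁻¹ * ∑ j ∈ Finset.range n, Y j ω - m)
            = (∑ j ∈ Finset.range n, Y j ω - n * m) / t := by
          rw [← ht2]
          field_simp
          rw [Real.sqrt_sq htpos.le]
        rw [heq, abs_div, abs_of_pos htpos, le_div_iff₀ htpos, mul_comm M t, mul_comm]
      rw [hsetEq]
      refine hcheb.trans (le_of_eq ?_)
      congr 1
      rw [hvarS]
      rw [mul_pow, ← ht2]
      field_simp
  intro δ hδ
  set d : ℝ := (min δ 1).toReal with hd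
  have hdne : min δ 1 ≠ ⊤ := ((min_le_right δ 1).trans_lt ENNReal.one_lt_top).ne
  have hdpos : 0 < d := ENNReal.toReal_pos (lt_min hδ zero_lt_one).ne' hdne
  refine ⟨Real.sqrt (v / d) + 1, by positivity, fun n => ?_⟩
  refine (cheb _ (by positivity) n).trans ?_
  have hMsq : v / d ≤ (Real.sqrt (v / d) + 1) ^ 2 := by
    have h1 : 0 ≤ v / d := by positivity
    nlinarith [Real.sq_sqrt h1, Real.sqrt_nonneg (v / d)]
  have hbound : v / (Real.sqrt (v / d) + 1) ^ 2 ≤ d := by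
    rw [div_le_iff₀ (by positivity)]
    calc v = (v / d) * d := by field_simp
    _ ≤ (Real.sqrt (v / d) + 1) ^ 2 * d := by
        apply mul_le_mul_of_nonneg_right hMsq hdpos.le
    _ = d * (Real.sqrt (v / d) + 1) ^ 2 := by ring
  calc ENNReal.ofReal (v / (Real.sqrt (v / d) + 1) ^ 2) ≤ ENNReal.ofReal d :=
        ENNReal.ofReal_le_ofReal hbound
    _ = min δ 1 := ENNReal.ofReal_toReal hdne
    _ ≤ δ := min_le_left _ _


/-- Theorem 2 (a) of the paper: the asymptotic representation
`√n (τ(I_n) − τ(I)) = G_n(F_φ) + o_ℙ(1)`, where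
`F_φ(x) = K_φ (h(x)/h₁(μ) − (B_h h₁'(μ)/h₁(μ)² + h₂'(μ)) x)` and
`K_φ = τ'(B_h/h₁(μ) − h₂(μ))`; the remainder tends to `0` in probability. -/
theorem theil_like_asymptotic_representation
    {Ω : Type*} [MeasurableSpace Ω] (P : Measure Ω) [IsProbabilityMeasure P]
    -- i.i.d. sample X, X₁, X₂, …, with values in an interval 𝒱_X ⊂ (0,∞)
    (X : ℕ → Ω → ℝ) (hXmeas : ∀ i, Measurable (X i))
    (hindep : iIndepFun X P)
    (hident : ∀ i, IdentDistrib (X i) (X 0) P P)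
    (V : Set ℝ) (hVsub : V ⊆ Set.Ioi (0 : ℝ)) (hVint : V.OrdConnected)
    (hXV : ∀ i ω, X i ω ∈ V)
    -- finite positive mean μ = E[X]
    (hXint : Integrable (X 0) P)
    (μ : ℝ) (hμdef : μ = ∫ ω, X 0 ω ∂P) (hμpos : 0 < μ)
    -- the measurable functions τ, h, h₁, h₂
    (τ h h₁ h₂ : ℝ → ℝ)
    (hτmeas : Measurable τ) (hhmeas : Measurable h)
    (hh₁meas : Measurable h₁) (hh₂meas : Measurable h₂)
    -- (C): h₁ is nonzero in a neighborhood of μ, with h₁(μ) ≠ 0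
    (hC : ∀ᶠ y in 𝓝 μ, h₁ y ≠ 0) (hCμ : h₁ μ ≠ 0)
    -- moment conditions: E[h(X)²] < ∞, E[X h(X)] < ∞, E[X²] < ∞
    (hh2int : Integrable (fun ω => (h (X 0 ω)) ^ 2) P)
    (hXhint : Integrable (fun ω => X 0 ω * h (X 0 ω)) P)
    (hX2int : Integrable (fun ω => (X 0 ω) ^ 2) P)
    -- h₁ and h₂ are continuously differentiable at μ (with finite values)
    (hh₁diff : ContDiffAt ℝ 1 h₁ μ) (hh₂diff : ContDiffAt ℝ 1 h₂ μ)
    -- τ is continuously differentiable with nonvanishing derivative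
    (hτdiff : ContDiff ℝ 1 τ) (hτ' : ∀ s, deriv τ s ≠ 0)
    -- empirical and theoretical quantities
    (μn : ℕ → Ω → ℝ) (hμn : ∀ n ω, μn n ω = (n : ℝ)⁻¹ * ∑ j ∈ Finset.range n, X j ω)
    (In : ℕ → Ω → ℝ)
    (hIn : ∀ n ω, In n ω =
      ((n : ℝ)⁻¹ * ∑ j ∈ Finset.range n, h (X j ω)) / h₁ (μn n ω) - h₂ (μn n ω))
    (Bh : ℝ) (hBh : Bh = ∫ ω, h (X 0 ω) ∂P)
    (I : ℝ) (hI : I = Bh / h₁ μ - h₂ μ)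
    (Kφ : ℝ) (hKφ : Kφ = deriv τ (Bh / h₁ μ - h₂ μ))
    (Fφ : ℝ → ℝ)
    (hFφ : ∀ x, Fφ x = Kφ * (h x / h₁ μ
        - (Bh * deriv h₁ μ / (h₁ μ) ^ 2 + deriv h₂ μ) * x))
    -- the functional empirical process evaluated at F_φ
    (GnFφ : ℕ → Ω → ℝ)
    (hGnFφ : ∀ n ω, GnFφ n ω =
      Real.sqrt n * ((n : ℝ)⁻¹ * ∑ j ∈ Finset.range n, Fφ (X j ω)
        - ∫ ω', Fφ (X 0 ω') ∂P)) :
    TendstoInMeasure P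
      (fun (n : ℕ) ω => Real.sqrt n * (τ (In n ω) - τ I) - GnFφ n ω) atTop
      (fun _ => (0 : ℝ)) := by
  -- proof body
  -- basic measurability / integrability
  have hhXmeas : ∀ i, Measurable fun ω => h (X i ω) := fun i => hhmeas.comp (hXmeas i)
  have hX2mem : MemLp (X 0) 2 P :=
    (memLp_two_iff_integrable_sq (hXmeas 0).aestronglyMeasurable).mpr hX2int
  have hh2mem : MemLp (fun ω => h (X 0 ω)) 2 P :=
    (memLp_two_iff_integrable_sq (hhXmeas 0).aestronglyMeasurable).mpr hh2int
  have hhint : Integrable (fun ω => h (X 0 ω)) P := hh2mem.integrable one_le_two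
  have hpair : Pairwise (Function.onFun (IndepFun · · P) X) := fun _ _ hij => hindep.indepFun hij
  have hpairh : Pairwise (Function.onFun (IndepFun · · P) fun i ω => h (X i ω)) :=
    fun _ _ hij => (hindep.indepFun hij).comp hhmeas hhmeas
  have hidenth : ∀ i, IdentDistrib (fun ω => h (X i ω)) (fun ω => h (X 0 ω)) P P :=
    fun i => (hident i).comp hhmeas
  -- derivative facts
  set ψ' : ℝ := -deriv h₁ μ / (h₁ μ) ^ 2 with hψ'def
  set c : ℝ := Bh * deriv h₁ μ / (h₁ μ) ^ 2 + deriv h₂ μ with hcdef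
  have hψderiv : HasDerivAt (fun y => (h₁ y)⁻¹) ψ' μ :=
    ((hh₁diff.differentiableAt one_ne_zero).hasDerivAt).inv hCμ
  have hτI : HasDerivAt τ Kφ I := by
    have := (hτdiff.differentiable one_ne_zero I).hasDerivAt
    rw [hKφ, ← hI]
    exact this
  have hh₂deriv : HasDerivAt h₂ (deriv h₂ μ) μ := (hh₂diff.differentiableAt one_ne_zero).hasDerivAt
  -- local sequences and correction functions
  set a : ℕ → Ω → ℝ := fun n ω => Real.sqrt n * (μn n ω - μ) with hadef
  set b : ℕ → Ω → ℝ := fun n ω =>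
    Real.sqrt n * ((n : ℝ)⁻¹ * ∑ j ∈ Finset.range n, h (X j ω) - Bh) with hbdef
  set q : ℝ → ℝ := fun y => if y = μ then ψ' else ((h₁ y)⁻¹ - (h₁ μ)⁻¹) / (y - μ) with hqdef
  set r : ℝ → ℝ := fun y => if y = μ then deriv h₂ μ else (h₂ y - h₂ μ) / (y - μ) with hrdef
  set g : ℝ → ℝ := fun y => (if y = I then Kφ else (τ y - τ I) / (y - I)) - Kφ with hgdef
  set U : ℕ → Ω → ℝ := fun n ω =>
    Kφ * ((h₁ (μn n ω))⁻¹ - (h₁ μ)⁻¹) + (h₁ (μn n ω))⁻¹ * g (In n ω) with hUdef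
  set V' : ℕ → Ω → ℝ := fun n ω =>
    Kφ * (Bh * q (μn n ω) - r (μn n ω) + c)
      + (Bh * q (μn n ω) - r (μn n ω)) * g (In n ω) with hVdef
  -- limits of the correction functions
  have hqT : Tendsto q (𝓝 μ) (𝓝 ψ') := by
    have := tendsto_slopePatch hψderiv
    exact this
  have hrT : Tendsto r (𝓝 μ) (𝓝 (deriv h₂ μ)) := tendsto_slopePatch hh₂deriv
  have hgT : Tendsto g (𝓝 I) (𝓝 0) := by
    have h1 := (tendsto_slopePatch hτI).sub_const Kφ
    simpa using h1
  -- the integral of Fφ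
  have hEFφ : ∫ ω', Fφ (X 0 ω') ∂P = Kφ * ((h₁ μ)⁻¹ * Bh - c * μ) := by
    have hfeq : (fun ω' => Fφ (X 0 ω')) =
        fun ω' => Kφ * ((h₁ μ)⁻¹ * h (X 0 ω') - c * X 0 ω') := by
      funext ω'
      rw [hFφ, hcdef]
      ring
    rw [hfeq]
    rw [integral_const_mul,
      integral_sub (hhint.const_mul _) (hXint.const_mul _),
      integral_const_mul, integral_const_mul, ← hBh, ← hμdef]
  -- the key pointwise algebraic identity
  have key : ∀ (n : ℕ) (ω : Ω), Real.sqrt n * (τ (In n ω) - τ I) - GnFφ n ω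
      = b n ω * U n ω + a n ω * V' n ω := by
    intro n ω
    have e1 : (h₁ (μn n ω))⁻¹ = (h₁ μ)⁻¹ + (μn n ω - μ) * q (μn n ω) := by
      by_cases hy : μn n ω = μ
      · simp [hy, hqdef]
      · simp only [hqdef, if_neg hy]
        rw [mul_comm, div_mul_cancel₀ _ (sub_ne_zero.mpr hy)]
        ring
    have e2 : h₂ (μn n ω) = h₂ μ + (μn n ω - μ) * r (μn n ω) := by
      by_cases hy : μn n ω = μ
      · simp [hy, hrdef]
      · simp only [hrdef, if_neg hy]
        rw [mul_comm, div_mul_cancel₀ _ (sub_ne_zero.mpr hy)]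
        ring
    have e3 : τ (In n ω) - τ I = (Kφ + g (In n ω)) * (In n ω - I) := by
      by_cases hy : In n ω = I
      · simp [hy, hgdef]
      · simp only [hgdef, if_neg hy]
        have hco : Kφ + ((τ (In n ω) - τ I) / (In n ω - I) - Kφ)
            = (τ (In n ω) - τ I) / (In n ω - I) := by ring
        rw [hco, div_mul_cancel₀ _ (sub_ne_zero.mpr hy)]
    have esum : (n : ℝ)⁻¹ * ∑ j ∈ Finset.range n, Fφ (X j ω)
        = Kφ * ((h₁ μ)⁻¹ * ((n : ℝ)⁻¹ * ∑ j ∈ Finset.range n, h (X j ω)) - c * μn n ω) := by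
      have hterm : ∀ j ∈ Finset.range n, Fφ (X j ω)
          = Kφ * ((h₁ μ)⁻¹ * h (X j ω) - c * X j ω) := by
        intro j _
        rw [hFφ, hcdef]
        ring
      rw [Finset.sum_congr rfl hterm, ← Finset.mul_sum, Finset.sum_sub_distrib,
        ← Finset.mul_sum, ← Finset.mul_sum, hμn]
      ring
    rw [e3, hGnFφ n ω, esum, hEFφ]
    simp only [hUdef, hVdef, hadef, hbdef]
    rw [hIn n ω, hI]
    simp only [div_eq_mul_inv]
    rw [e2, e1]
    ring
  -- strong laws of large numbers
  have hSLLNX : ∀ᵐ ω ∂P, Tendsto (fun n => μn n ω) atTop (𝓝 μ) := by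
    filter_upwards [strong_law_ae_real X hXint hpair hident] with ω hω
    rw [hμdef]
    refine hω.congr fun n => ?_
    rw [hμn]
    rw [div_eq_inv_mul]
  have hSLLNh : ∀ᵐ ω ∂P,
      Tendsto (fun (n : ℕ) => (n : ℝ)⁻¹ * ∑ j ∈ Finset.range n, h (X j ω)) atTop (𝓝 Bh) := by
    filter_upwards [strong_law_ae_real (fun i ω => h (X i ω)) hhint hpairh hidenth] with ω hω
    rw [hBh]
    refine hω.congr fun n => ?_
    rw [div_eq_inv_mul]
  -- a.e. convergence of U and V' to 0
  have haeUV : ∀ᵐ ω ∂P, Tendsto (fun n => U n ω) atTop (𝓝 0)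
      ∧ Tendsto (fun n => V' n ω) atTop (𝓝 0) := by
    filter_upwards [hSLLNX, hSLLNh] with ω hμω hsω
    have hψc : Tendsto (fun n => (h₁ (μn n ω))⁻¹) atTop (𝓝 ((h₁ μ)⁻¹)) :=
      (hψderiv.continuousAt.tendsto).comp hμω
    have hh₂c : Tendsto (fun n => h₂ (μn n ω)) atTop (𝓝 (h₂ μ)) :=
      (hh₂deriv.continuousAt.tendsto).comp hμω
    have hIω : Tendsto (fun n => In n ω) atTop (𝓝 I) := by
      have : Tendsto (fun (n : ℕ) => ((n : ℝ)⁻¹ * ∑ j ∈ Finset.range n, h (X j ω))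
          * (h₁ (μn n ω))⁻¹ - h₂ (μn n ω)) atTop (𝓝 (Bh * (h₁ μ)⁻¹ - h₂ μ)) :=
        (hsω.mul hψc).sub hh₂c
      rw [hI, div_eq_mul_inv]
      refine this.congr fun n => ?_
      rw [hIn, div_eq_mul_inv]
    have hgω : Tendsto (fun n => g (In n ω)) atTop (𝓝 0) := hgT.comp hIω
    have hqω : Tendsto (fun n => q (μn n ω)) atTop (𝓝 ψ') := hqT.comp hμω
    have hrω : Tendsto (fun n => r (μn n ω)) atTop (𝓝 (deriv h₂ μ)) := hrT.comp hμω
    constructor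
    · have hl : Tendsto (fun n => U n ω) atTop
          (𝓝 (Kφ * ((h₁ μ)⁻¹ - (h₁ μ)⁻¹) + (h₁ μ)⁻¹ * 0)) := by
        simp only [hUdef]
        exact ((tendsto_const_nhds.mul (hψc.sub tendsto_const_nhds)).add (hψc.mul hgω))
      simpa using hl
    · have hl : Tendsto (fun n => V' n ω) atTop
          (𝓝 (Kφ * (Bh * ψ' - deriv h₂ μ + c)
            + (Bh * ψ' - deriv h₂ μ) * 0)) := by
        simp only [hVdef]
        exact ((tendsto_const_nhds.mul
          (((tendsto_const_nhds.mul hqω).sub hrω).add tendsto_const_nhds)).add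
          (((tendsto_const_nhds.mul hqω).sub hrω).mul hgω))
      have hzero : Kφ * (Bh * ψ' - deriv h₂ μ + c) + (Bh * ψ' - deriv h₂ μ) * 0 = 0 := by
        rw [hψ'def, hcdef]
        ring
      rwa [hzero] at hl
  -- measurability of U and V'
  have hμnmeas : ∀ n, Measurable (μn n) := by
    intro n
    have : μn n = fun ω => (n : ℝ)⁻¹ * ∑ j ∈ Finset.range n, X j ω := funext (hμn n)
    rw [this]
    exact (Finset.measurable_sum _ fun j _ => hXmeas j).const_mul _
  have hInmeas : ∀ n, Measurable (In n) := by
    intro n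
    have : In n = fun ω => ((n : ℝ)⁻¹ * ∑ j ∈ Finset.range n, h (X j ω)) / h₁ (μn n ω)
        - h₂ (μn n ω) := funext (hIn n)
    rw [this]
    exact (((Finset.measurable_sum _ fun j _ => hhXmeas j).const_mul _).div
      (hh₁meas.comp (hμnmeas n))).sub (hh₂meas.comp (hμnmeas n))
  have hqmeas : Measurable q := by
    rw [hqdef]
    exact Measurable.ite (by simp [Set.setOf_eq_eq_singleton]) measurable_const
      ((hh₁meas.inv.sub measurable_const).div (measurable_id.sub measurable_const))
  have hrmeas : Measurable r := by
    rw [hrdef]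
    exact Measurable.ite (by simp [Set.setOf_eq_eq_singleton]) measurable_const
      ((hh₂meas.sub measurable_const).div (measurable_id.sub measurable_const))
  have hgmeas : Measurable g := by
    rw [hgdef]
    exact (Measurable.ite (by simp [Set.setOf_eq_eq_singleton]) measurable_const
      ((hτmeas.sub measurable_const).div (measurable_id.sub measurable_const))).sub
      measurable_const
  have hUmeas : ∀ n, Measurable (U n) := by
    intro n
    rw [hUdef]
    exact (((hh₁meas.comp (hμnmeas n)).inv.sub measurable_const).const_mul _).add
      (((hh₁meas.comp (hμnmeas n)).inv).mul (hgmeas.comp (hInmeas n)))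
  have hVmeas : ∀ n, Measurable (V' n) := by
    intro n
    rw [hVdef]
    exact ((((hqmeas.comp (hμnmeas n)).const_mul _).sub
      (hrmeas.comp (hμnmeas n))).add_const _).const_mul _ |>.add
      ((((hqmeas.comp (hμnmeas n)).const_mul _).sub
        (hrmeas.comp (hμnmeas n))).mul (hgmeas.comp (hInmeas n)))
  -- convergence in measure of U and V'
  have hUim : TendstoInMeasure P U atTop (fun _ => (0 : ℝ)) :=
    tendstoInMeasure_of_tendsto_ae (fun n => (hUmeas n).aestronglyMeasurable)
      (haeUV.mono fun ω hω => hω.1)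
  have hVim : TendstoInMeasure P V' atTop (fun _ => (0 : ℝ)) :=
    tendstoInMeasure_of_tendsto_ae (fun n => (hVmeas n).aestronglyMeasurable)
      (haeUV.mono fun ω hω => hω.2)
  -- tightness of a and b
  have hTa : ∀ δ : ℝ≥0∞, 0 < δ → ∃ M : ℝ, 0 < M ∧ ∀ n, P {ω | M ≤ |a n ω|} ≤ δ := by
    intro δ hδ
    obtain ⟨M, hM, hMn⟩ := tight_of_iid P X hXmeas hpair hident hX2mem μ hμdef δ hδ
    refine ⟨M, hM, fun n => le_trans (le_of_eq ?_) (hMn n)⟩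
    congr 1
    ext ω
    simp only [hadef, Set.mem_setOf_eq, hμn]
  have hTb : ∀ δ : ℝ≥0∞, 0 < δ → ∃ M : ℝ, 0 < M ∧ ∀ n, P {ω | M ≤ |b n ω|} ≤ δ := by
    intro δ hδ
    obtain ⟨M, hM, hMn⟩ := tight_of_iid P (fun i ω => h (X i ω)) hhXmeas hpairh hidenth
      hh2mem Bh hBh δ hδ
    exact ⟨M, hM, fun n => hMn n⟩
  -- assemble
  have hfin : TendstoInMeasure P (fun n ω => b n ω * U n ω + a n ω * V' n ω) atTop
      (fun _ => (0 : ℝ)) :=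
    tendstoInMeasure_zero_add' (tendstoInMeasure_zero_mul' hTb hUim)
      (tendstoInMeasure_zero_mul' hTa hVim)
  have hfun : (fun (n : ℕ) ω => Real.sqrt n * (τ (In n ω) - τ I) - GnFφ n ω)
      = fun n ω => b n ω * U n ω + a n ω * V' n ω := by
    funext n ω
    exact key n ω
  rw [hfun]
  exact hfin
end

section
/- Fix α > 0 and let I_{n,α} = e^{α μ_n} P_n(e^{−α x}), I_α = e^{α μ} E[e^{−α X}], and B_h = E[e^{−α X}]. Assume E[X²] < ∞, E[e^{−2αX}] < ∞, and E[X e^{−αX}] < ∞. Then √n (I_{n,α} − I_α) = G_n( e^{α μ} ( e^{−α x} + α B_h x ) ) + R_n, where R_n converges to 0 in probability as n → ∞. -/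
open MeasureTheory ProbabilityTheory Filter Real
open scoped NNReal Topology

lemma key_tendsto {Ω : Type*} [MeasurableSpace Ω] (P : Measure Ω) [IsProbabilityMeasure P]
    (S g R : ℕ → Ω → ℝ) (C : ℝ) (hC : 0 ≤ C)
    (hS : ∀ M : ℝ, 0 < M → ∀ n, P {ω | M ≤ |S n ω|} ≤ ENNReal.ofReal (C / M ^ 2))
    (hg : TendstoInMeasure P g atTop (fun _ => (0:ℝ)))
    (hR : ∀ n ω, |g n ω| ≤ 1 → |R n ω| ≤ |S n ω| * |g n ω|) :
    TendstoInMeasure P R atTop (fun _ => (0:ℝ)) := by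
  rw [tendstoInMeasure_iff_dist] at hg ⊢
  intro ε hε
  rw [ENNReal.tendsto_atTop_zero]
  intro η hη
  by_cases hηtop : η = ⊤
  · exact ⟨0, fun n _ => by simp [hηtop]⟩
  set r : ℝ := (min η 1).toReal with hrdef
  have hrne : min η 1 ≠ ⊤ := ne_top_of_le_ne_top (by simp) (min_le_right _ _)
  have hrpos : 0 < r := ENNReal.toReal_pos (lt_min hη (by norm_num)).ne' hrne
  have hofr : ENNReal.ofReal r = min η 1 := ENNReal.ofReal_toReal hrne
  set M : ℝ := Real.sqrt (2 * C / r) + 1 with hMdef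
  have hMpos : 0 < M := by positivity
  have hCM : C / M ^ 2 ≤ r / 2 := by
    have h1 : 2 * C / r ≤ M ^ 2 := by
      have := Real.sq_sqrt (by positivity : (0:ℝ) ≤ 2 * C / r)
      nlinarith [Real.sqrt_nonneg (2 * C / r)]
    rw [div_le_div_iff₀ (by positivity) (by norm_num)]
    calc C * 2 = (2 * C / r) * r := by field_simp
    _ ≤ M ^ 2 * r := by nlinarith
    _ = r * M ^ 2 := by ring
  set t : ℝ := min 1 (ε / M) with htdef
  have htpos : 0 < t := lt_min one_pos (by positivity)
  have hgev : ∀ᶠ n in atTop, P {ω | t ≤ dist (g n ω) 0} ≤ ENNReal.ofReal (r / 2) :=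
    (hg t htpos).eventually_le_const (by simp [ENNReal.ofReal_pos, hrpos])
  obtain ⟨N, hN⟩ := eventually_atTop.1 hgev
  refine ⟨N, fun n hn => ?_⟩
  have hsub : {ω | ε ≤ dist (R n ω) 0} ⊆ {ω | M ≤ |S n ω|} ∪ {ω | t ≤ dist (g n ω) 0} := by
    intro ω hω
    simp only [Real.dist_0_eq_abs, Set.mem_setOf_eq, Set.mem_union] at *
    by_contra hcon
    push_neg at hcon
    obtain ⟨hSlt, hglt⟩ := hcon
    have hg1 : |g n ω| ≤ 1 := le_of_lt (lt_of_lt_of_le hglt (min_le_left _ _))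
    have : |R n ω| < ε := by
      calc |R n ω| ≤ |S n ω| * |g n ω| := hR n ω hg1
      _ < M * t := by
          rcases eq_or_lt_of_le (abs_nonneg (g n ω)) with h0 | h0
          · rw [← h0, mul_zero]; positivity
          · exact mul_lt_mul'' hSlt hglt (abs_nonneg _) (abs_nonneg _)
      _ ≤ M * (ε / M) := by
          exact mul_le_mul_of_nonneg_left (min_le_right _ _) hMpos.le
      _ = ε := by field_simp
    exact absurd hω (not_le.2 this)
  calc P {ω | ε ≤ dist (R n ω) 0} ≤ P ({ω | M ≤ |S n ω|} ∪ {ω | t ≤ dist (g n ω) 0}) :=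
        measure_mono hsub
  _ ≤ P {ω | M ≤ |S n ω|} + P {ω | t ≤ dist (g n ω) 0} := measure_union_le _ _
  _ ≤ ENNReal.ofReal (C / M ^ 2) + ENNReal.ofReal (r / 2) := add_le_add (hS M hMpos n) (hN n hn)
  _ ≤ ENNReal.ofReal (r / 2) + ENNReal.ofReal (r / 2) :=
        add_le_add_left (ENNReal.ofReal_le_ofReal hCM) _
  _ = ENNReal.ofReal r := by rw [← ENNReal.ofReal_add (by positivity) (by positivity)]; norm_num
  _ ≤ η := hofr ▸ min_le_left _ _

lemma tight_aux {Ω : Type*} [MeasurableSpace Ω] (P : Measure Ω) [IsProbabilityMeasure P]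
    (X : ℕ → Ω → ℝ)
    (hindep : iIndepFun X P)
    (hident : ∀ i, IdentDistrib (X i) (X 0) P P)
    (hL2 : ∀ i, MemLp (X i) 2 P)
    (μ : ℝ) (hμdef : μ = ∫ ω, X 0 ω ∂P)
    (M : ℝ) (hM : 0 < M) (n : ℕ) :
    P {ω | M ≤ |Real.sqrt n * ((n : ℝ)⁻¹ * ∑ j ∈ Finset.range n, X j ω - μ)|}
      ≤ ENNReal.ofReal (variance (X 0) P / M ^ 2) := by
  rcases Nat.eq_zero_or_pos n with rfl | hn
  · have : {ω | M ≤ |Real.sqrt 0 * ((0 : ℝ)⁻¹ * ∑ j ∈ Finset.range 0, X j ω - μ)|} = ∅ := by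
      ext ω; simp [Real.sqrt_zero, not_le, hM]
    rw [show ((0:ℕ):ℝ) = (0:ℝ) by norm_num] at *
    rw [this]
    simp
  have hnR : (0:ℝ) < n := Nat.cast_pos.2 hn
  have hsq : (0:ℝ) < Real.sqrt n := Real.sqrt_pos.2 hnR
  set Y : Ω → ℝ := fun ω => ∑ j ∈ Finset.range n, X j ω with hY
  have hYL2 : MemLp Y 2 P := by
    have h := memLp_finset_sum' (Finset.range n) (fun i (_ : i ∈ Finset.range n) => hL2 i)
    have he : (∑ i ∈ Finset.range n, X i) = Y := by funext ω; simp [hY]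
    rwa [he] at h
  have hEY : P[Y] = n * μ := by
    rw [hY]
    rw [integral_finset_sum _ (fun i _ => (hL2 i).integrable one_le_two)]
    have : ∀ i ∈ Finset.range n, ∫ ω, X i ω ∂P = μ := by
      intro i _; rw [(hident i).integral_eq, hμdef]
    rw [Finset.sum_congr rfl this, Finset.sum_const, Finset.card_range, nsmul_eq_mul]
  have hVarY : variance Y P = n * variance (X 0) P := by
    rw [hY, show (fun ω => ∑ j ∈ Finset.range n, X j ω) = ∑ j ∈ Finset.range n, X j from by
      funext ω; simp]
    rw [IndepFun.variance_sum (fun i _ => hL2 i)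
      (fun i _ j _ hij => hindep.indepFun hij)]
    have : ∀ i ∈ Finset.range n, variance (X i) P = variance (X 0) P := by
      intro i _; exact (hident i).variance_eq
    rw [Finset.sum_congr rfl this, Finset.sum_const, Finset.card_range, nsmul_eq_mul]
  have cheb := meas_ge_le_variance_div_sq (μ := P) hYL2 (c := M * Real.sqrt n) (by positivity)
  have hset : {ω | M ≤ |Real.sqrt n * ((n : ℝ)⁻¹ * ∑ j ∈ Finset.range n, X j ω - μ)|}
      = {ω | M * Real.sqrt n ≤ |Y ω - P[Y]|} := by
    ext ω
    simp only [Set.mem_setOf_eq, hEY]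
    have h1 : Real.sqrt n * Real.sqrt n = (n:ℝ) := Real.mul_self_sqrt (Nat.cast_nonneg n)
    have hkey : |Y ω - n * μ|
        = Real.sqrt n * |Real.sqrt n * ((n : ℝ)⁻¹ * Y ω - μ)| := by
      calc |Y ω - n * μ| = |Real.sqrt n * (Real.sqrt n * ((n : ℝ)⁻¹ * Y ω - μ))| := by
            congr 1
            rw [← mul_assoc, h1]
            field_simp
        _ = |Real.sqrt n| * |Real.sqrt n * ((n : ℝ)⁻¹ * Y ω - μ)| := abs_mul _ _
        _ = Real.sqrt n * |Real.sqrt n * ((n : ℝ)⁻¹ * Y ω - μ)| := by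
            rw [abs_of_nonneg hsq.le]
    rw [hkey]
    constructor
    · intro h; calc M * Real.sqrt n = Real.sqrt n * M := by ring
        _ ≤ Real.sqrt n * |Real.sqrt n * ((n : ℝ)⁻¹ * Y ω - μ)| :=
          mul_le_mul_of_nonneg_left h hsq.le
    · intro h
      have := (mul_le_mul_iff_of_pos_left hsq).1 (by linarith [h] : Real.sqrt n * M ≤ Real.sqrt n * |Real.sqrt n * ((n : ℝ)⁻¹ * Y ω - μ)|)
      exact this
  rw [hset]
  refine cheb.trans (le_of_eq ?_)
  congr 1
  rw [hVarY, mul_pow, Real.sq_sqrt (Nat.cast_nonneg n)]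
  field_simp

/-- for `α > 0`, the asymptotic representation for the Kolm
index statistic:
`√n (I_{n,α} − I_α) = G_n(e^{αμ}(e^{−αx} + α B_h x)) + o_ℙ(1)`,
where `I_{n,α} = e^{α μ_n} P_n(e^{−α x})`, `I_α = e^{α μ} E[e^{−α X}]`,
`B_h = E[e^{−α X}]`, and the remainder tends to `0` in probability. -/
theorem kolm_asymptotic_representation
    {Ω : Type*} [MeasurableSpace Ω] (P : Measure Ω) [IsProbabilityMeasure P]
    -- i.i.d. sample X, X₁, X₂, …, with values in an interval 𝒱_X ⊂ (0,∞)
    (X : ℕ → Ω → ℝ) (hXmeas : ∀ i, Measurable (X i))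
    (hindep : iIndepFun X P)
    (hident : ∀ i, IdentDistrib (X i) (X 0) P P)
    (V : Set ℝ) (hVsub : V ⊆ Set.Ioi (0 : ℝ)) (hVint : V.OrdConnected)
    (hXV : ∀ i ω, X i ω ∈ V)
    -- finite positive mean μ = E[X]
    (hXint : Integrable (X 0) P)
    (μ : ℝ) (hμdef : μ = ∫ ω, X 0 ω ∂P) (hμpos : 0 < μ)
    -- the parameter α > 0
    (α : ℝ) (hαpos : 0 < α)
    -- moment conditions: E[X²] < ∞, E[e^(−2αX)] < ∞, E[X e^(−αX)] < ∞
    (hX2int : Integrable (fun ω => (X 0 ω) ^ 2) P)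
    (hexp2int : Integrable (fun ω => Real.exp (-(2 * α) * X 0 ω)) P)
    (hXexpint : Integrable (fun ω => X 0 ω * Real.exp (-α * X 0 ω)) P)
    -- empirical and theoretical quantities
    (μn : ℕ → Ω → ℝ) (hμn : ∀ n ω, μn n ω = (n : ℝ)⁻¹ * ∑ j ∈ Finset.range n, X j ω)
    (Inα : ℕ → Ω → ℝ)
    (hInα : ∀ n ω, Inα n ω = Real.exp (α * μn n ω)
        * ((n : ℝ)⁻¹ * ∑ j ∈ Finset.range n, Real.exp (-α * X j ω)))
    (Bh : ℝ) (hBh : Bh = ∫ ω, Real.exp (-α * X 0 ω) ∂P)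
    (Iα : ℝ) (hIα : Iα = Real.exp (α * μ) * Bh)
    -- the function indexing the functional empirical process
    (f : ℝ → ℝ)
    (hf : ∀ x, f x = Real.exp (α * μ) * (Real.exp (-α * x) + α * Bh * x))
    (Gnf : ℕ → Ω → ℝ)
    (hGnf : ∀ n ω, Gnf n ω =
      Real.sqrt n * ((n : ℝ)⁻¹ * ∑ j ∈ Finset.range n, f (X j ω)
        - ∫ ω', f (X 0 ω') ∂P)) :
    TendstoInMeasure P
      (fun (n : ℕ) ω => Real.sqrt n * (Inα n ω - Iα) - Gnf n ω) atTop
      (fun _ => (0 : ℝ)) := by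
  have hXpos : ∀ i ω, 0 < X i ω := fun i ω => hVsub (hXV i ω)
  set e : ℝ := Real.exp (α * μ) with he
  have hepos : 0 < e := Real.exp_pos _
  have hφmeas : Measurable (fun x : ℝ => Real.exp (-α * x)) := (measurable_id.const_mul (-α)).exp
  have hexpmeas : ∀ i, Measurable (fun ω => Real.exp (-α * X i ω)) :=
    fun i => hφmeas.comp (hXmeas i)
  have hexpint : Integrable (fun ω => Real.exp (-α * X 0 ω)) P := by
    refine Integrable.mono' (integrable_const 1) (hexpmeas 0).aestronglyMeasurable ?_
    filter_upwards with ω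
    rw [Real.norm_eq_abs, abs_of_pos (Real.exp_pos _)]
    exact Real.exp_le_one_iff.2 (by nlinarith [hXpos 0 ω])
  set A : ℕ → Ω → ℝ := fun n ω => (n:ℝ)⁻¹ * ∑ j ∈ Finset.range n, Real.exp (-α * X j ω) with hA
  have hA0 : ∀ n ω, 0 ≤ A n ω := fun n ω =>
    mul_nonneg (by positivity) (Finset.sum_nonneg fun j _ => (Real.exp_pos _).le)
  have hA1 : ∀ n ω, A n ω ≤ 1 := by
    intro n ω
    rcases Nat.eq_zero_or_pos n with rfl | hn
    · simp [hA]
    · have hsum : ∑ j ∈ Finset.range n, Real.exp (-α * X j ω) ≤ (n:ℝ) := by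
        calc ∑ j ∈ Finset.range n, Real.exp (-α * X j ω) ≤ ∑ j ∈ Finset.range n, 1 :=
              Finset.sum_le_sum fun j _ => Real.exp_le_one_iff.2 (by nlinarith [hXpos j ω])
          _ = (n:ℝ) := by simp
      have hnpos : (0:ℝ) < n := Nat.cast_pos.2 hn
      calc A n ω ≤ (n:ℝ)⁻¹ * (n:ℝ) := mul_le_mul_of_nonneg_left hsum (by positivity)
        _ = 1 := by field_simp
  -- SLLN for μn
  have hslX : ∀ᵐ ω ∂P, Tendsto (fun n => μn n ω) atTop (𝓝 μ) := by
    have h := strong_law_ae X hXint (fun i j hij => hindep.indepFun hij) hident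
    filter_upwards [h] with ω hω
    have heq : (fun n : ℕ => μn n ω) = fun n : ℕ => (n:ℝ)⁻¹ • ∑ i ∈ Finset.range n, X i ω := by
      funext n; rw [hμn, smul_eq_mul]
    rw [heq, hμdef]
    exact hω
  -- SLLN for A
  have hslA : ∀ᵐ ω ∂P, Tendsto (fun n => A n ω) atTop (𝓝 Bh) := by
    have h := strong_law_ae (fun i ω => Real.exp (-α * X i ω)) hexpint
      (fun i j hij => (hindep.indepFun hij).comp hφmeas hφmeas)
      (fun i => (hident i).comp hφmeas)
    filter_upwards [h] with ω hω
    have heq : (fun n : ℕ => A n ω)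
        = fun n : ℕ => (n:ℝ)⁻¹ • ∑ i ∈ Finset.range n, Real.exp (-α * X i ω) := by
      funext n; rw [hA, smul_eq_mul]
    rw [heq, hBh]
    exact hω
  set K : ℝ := max (e * α ^ 2) α with hK
  have hKα : α ≤ K := le_max_right _ _
  have hKe : e * α ^ 2 ≤ K := le_max_left _ _
  have hKpos : 0 < K := lt_of_lt_of_le hαpos hKα
  set g : ℕ → Ω → ℝ := fun n ω => K * |μn n ω - μ| + α * e * |A n ω - Bh| with hg
  have hgnn : ∀ n ω, 0 ≤ g n ω := fun n ω => by
    have := abs_nonneg (μn n ω - μ); have := abs_nonneg (A n ω - Bh); positivity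
  have hgae : ∀ᵐ ω ∂P, Tendsto (fun n => g n ω) atTop (𝓝 0) := by
    filter_upwards [hslX, hslA] with ω h1 h2
    have t1 : Tendsto (fun n => K * |μn n ω - μ|) atTop (𝓝 (K * |μ - μ|)) :=
      ((h1.sub_const μ).abs).const_mul K
    have t2 : Tendsto (fun n => α * e * |A n ω - Bh|) atTop (𝓝 (α * e * |Bh - Bh|)) :=
      ((h2.sub_const Bh).abs).const_mul (α * e)
    have := t1.add t2
    simpa using this
  have hμnmeas : ∀ n, Measurable (μn n) := by
    intro n
    have heq : μn n = fun ω => (n:ℝ)⁻¹ * ∑ j ∈ Finset.range n, X j ω := funext (hμn n)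
    rw [heq]
    exact (Finset.measurable_sum _ (fun j _ => hXmeas j)).const_mul _
  have hAmeas : ∀ n, Measurable (A n) := fun n =>
    (Finset.measurable_sum _ (fun j _ => hexpmeas j)).const_mul _
  have hgmeas : ∀ n, Measurable (g n) := fun n =>
    (((hμnmeas n).sub measurable_const).abs.const_mul K).add
      (((hAmeas n).sub measurable_const).abs.const_mul (α * e))
  have hgim : TendstoInMeasure P g atTop (fun _ => (0:ℝ)) :=
    tendstoInMeasure_of_tendsto_ae (fun n => (hgmeas n).aestronglyMeasurable) hgae
  -- L2
  have hL2 : ∀ i, MemLp (X i) 2 P := by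
    intro i
    have h0 : MemLp (X 0) 2 P :=
      (memLp_two_iff_integrable_sq (hXmeas 0).aestronglyMeasurable).2 hX2int
    exact (hident i).symm.memLp_snd h0
  -- tightness
  have hSbound : ∀ M : ℝ, 0 < M → ∀ n : ℕ,
      P {ω | M ≤ |Real.sqrt n * (μn n ω - μ)|} ≤ ENNReal.ofReal (variance (X 0) P / M ^ 2) := by
    intro M hM n
    have h := tight_aux P X hindep hident hL2 μ hμdef M hM n
    simp only [hμn]
    exact h
  -- expectation of f ∘ X 0
  have hEf : ∫ ω', f (X 0 ω') ∂P = e * (Bh + α * Bh * μ) := by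
    have heq : (fun ω' => f (X 0 ω'))
        = fun ω' => e * (Real.exp (-α * X 0 ω') + α * Bh * X 0 ω') := by
      funext ω'; rw [hf]
    rw [heq]
    rw [integral_const_mul]
    rw [integral_add hexpint (hXint.const_mul (α * Bh))]
    rw [integral_const_mul, ← hBh, ← hμdef]
  -- algebraic identity
  have hid : ∀ (n : ℕ) ω, Real.sqrt n * (Inα n ω - Iα) - Gnf n ω
      = e * (A n ω * (Real.sqrt n * (Real.exp (α * (μn n ω - μ)) - 1 - α * (μn n ω - μ)))
           + α * (Real.sqrt n * (μn n ω - μ)) * (A n ω - Bh)) := by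
    intro n ω
    have hPnf : (n:ℝ)⁻¹ * ∑ j ∈ Finset.range n, f (X j ω) = e * (A n ω + α * Bh * μn n ω) := by
      have hsum : ∑ j ∈ Finset.range n, f (X j ω)
          = e * (∑ j ∈ Finset.range n, Real.exp (-α * X j ω))
            + e * (α * Bh) * ∑ j ∈ Finset.range n, X j ω := by
        rw [Finset.mul_sum, Finset.mul_sum, ← Finset.sum_add_distrib]
        exact Finset.sum_congr rfl fun j _ => by rw [hf]; ring
      rw [hsum, hμn]
      simp only [hA]
      ring
    have hexpsplit : Real.exp (α * μn n ω) = e * Real.exp (α * (μn n ω - μ)) := by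
      rw [he, ← Real.exp_add]; ring_nf
    rw [hGnf, hInα, hEf, hPnf, hIα, hexpsplit]
    simp only [hA]
    ring
  -- pointwise bound
  have hR : ∀ (n : ℕ) ω, |g n ω| ≤ 1 →
      |Real.sqrt n * (Inα n ω - Iα) - Gnf n ω|
        ≤ |Real.sqrt n * (μn n ω - μ)| * |g n ω| := by
    intro n ω hg1
    have hgval : g n ω = K * |μn n ω - μ| + α * e * |A n ω - Bh| := by rw [hg]
    rw [abs_of_nonneg (hgnn n ω)] at hg1 ⊢
    rw [hid n ω, hgval,
      abs_mul (Real.sqrt (n:ℝ)) (μn n ω - μ), abs_of_nonneg (Real.sqrt_nonneg (n:ℝ))]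
    have hsqn : (0:ℝ) ≤ Real.sqrt (n:ℝ) := Real.sqrt_nonneg _
    have hbnn : (0:ℝ) ≤ |μn n ω - μ| := abs_nonneg _
    have hpnn : (0:ℝ) ≤ |A n ω - Bh| := abs_nonneg _
    have hterm1 : K * |μn n ω - μ| ≤ g n ω := by
      rw [hgval]; exact le_add_of_nonneg_right (by positivity)
    have hαd : |α * (μn n ω - μ)| ≤ 1 := by
      rw [abs_mul, abs_of_pos hαpos]
      have h1 : α * |μn n ω - μ| ≤ K * |μn n ω - μ| := mul_le_mul_of_nonneg_right hKα hbnn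
      linarith
    have hqb : |Real.exp (α * (μn n ω - μ)) - 1 - α * (μn n ω - μ)|
        ≤ α ^ 2 * |μn n ω - μ| ^ 2 := by
      have h2 := Real.abs_exp_sub_one_sub_id_le hαd
      calc |Real.exp (α * (μn n ω - μ)) - 1 - α * (μn n ω - μ)|
          ≤ (α * (μn n ω - μ)) ^ 2 := h2
        _ = α ^ 2 * |μn n ω - μ| ^ 2 := by rw [sq_abs]; ring
    calc |e * (A n ω * (Real.sqrt n * (Real.exp (α * (μn n ω - μ)) - 1 - α * (μn n ω - μ)))
           + α * (Real.sqrt n * (μn n ω - μ)) * (A n ω - Bh))|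
        = e * |A n ω * (Real.sqrt n * (Real.exp (α * (μn n ω - μ)) - 1 - α * (μn n ω - μ)))
           + α * (Real.sqrt n * (μn n ω - μ)) * (A n ω - Bh)| := by
          rw [abs_mul, abs_of_pos hepos]
      _ ≤ e * (|A n ω * (Real.sqrt n * (Real.exp (α * (μn n ω - μ)) - 1 - α * (μn n ω - μ)))|
           + |α * (Real.sqrt n * (μn n ω - μ)) * (A n ω - Bh)|) :=
          mul_le_mul_of_nonneg_left (abs_add_le _ _) hepos.le
      _ = e * (A n ω * (Real.sqrt n
              * |Real.exp (α * (μn n ω - μ)) - 1 - α * (μn n ω - μ)|)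
           + α * (Real.sqrt n * |μn n ω - μ|) * |A n ω - Bh|) := by
          rw [abs_mul (A n ω)
              (Real.sqrt (n:ℝ) * (Real.exp (α * (μn n ω - μ)) - 1 - α * (μn n ω - μ))),
            abs_mul (Real.sqrt (n:ℝ)) (Real.exp (α * (μn n ω - μ)) - 1 - α * (μn n ω - μ)),
            abs_of_nonneg (hA0 n ω), abs_of_nonneg hsqn,
            abs_mul (α * (Real.sqrt (n:ℝ) * (μn n ω - μ))) (A n ω - Bh),
            abs_mul α (Real.sqrt (n:ℝ) * (μn n ω - μ)),
            abs_mul (Real.sqrt (n:ℝ)) (μn n ω - μ),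
            abs_of_pos hαpos, abs_of_nonneg hsqn]
      _ ≤ e * (1 * (Real.sqrt n * (α ^ 2 * |μn n ω - μ| ^ 2))
           + α * (Real.sqrt n * |μn n ω - μ|) * |A n ω - Bh|) := by
          gcongr
          exact hA1 n ω
      _ ≤ Real.sqrt n * |μn n ω - μ| * (K * |μn n ω - μ| + α * e * |A n ω - Bh|) := by
          nlinarith [mul_le_mul_of_nonneg_right hKe
            (by positivity : (0:ℝ) ≤ Real.sqrt (n:ℝ) * |μn n ω - μ| ^ 2),
            mul_nonneg (mul_nonneg hsqn hbnn) hpnn, hepos.le, hαpos.le]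
  exact key_tendsto P (fun n ω => Real.sqrt n * (μn n ω - μ)) g _ (variance (X 0) P)
    (variance_nonneg _ _) hSbound hgim hR
end
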